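/- arXiv:2210.14883 — 3 statements merged into one kernel-verified Lean document; each statement's English description precedes it below -/
import Mathlib

section
/- Let u, v, w be six-vertex matrices (with a₁,a₂,c₁,c₂ nonzero) satisfying [[u,w,v]] = 0, with c₁(w) = c₁(u)c₁(v) and c₂(w) = c₂(u)c₂(v). Then necessarily a₁(w) = a₁(u)a₁(v) − b₁(v)b₂(u) and a₂(w) = a₂(u)a₂(v) − b₁(u)b₂(v). -/
open Matrix

/-- `u ⊗ 1` on `ℂ² ⊗ ℂ² ⊗ ℂ²`. -/
noncomputable def tenL (u : Matrix (Fin 2 × Fin 2) (Fin 2 × Fin 2) ℂ) :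
    Matrix (Fin 2 × Fin 2 × Fin 2) (Fin 2 × Fin 2 × Fin 2) ℂ :=
  Matrix.of fun p q => u (p.1, p.2.1) (q.1, q.2.1) * (if p.2.2 = q.2.2 then 1 else 0)

/-- `1 ⊗ u` on `ℂ² ⊗ ℂ² ⊗ ℂ²`. -/
noncomputable def tenR (u : Matrix (Fin 2 × Fin 2) (Fin 2 × Fin 2) ℂ) :
    Matrix (Fin 2 × Fin 2 × Fin 2) (Fin 2 × Fin 2 × Fin 2) ℂ :=
  Matrix.of fun p q => (if p.1 = q.1 then 1 else 0) * u (p.2.1, p.2.2) (q.2.1, q.2.2)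

/-- The Yang–Baxter commutator `[[u,w,v]]`. -/
noncomputable def ybc (u w v : Matrix (Fin 2 × Fin 2) (Fin 2 × Fin 2) ℂ) :
    Matrix (Fin 2 × Fin 2 × Fin 2) (Fin 2 × Fin 2 × Fin 2) ℂ :=
  tenL u * tenR w * tenL v - tenR v * tenL w * tenR u

/-- The six-vertex matrix with entries `a₁,a₂,b₁,b₂,c₁,c₂`, as an endomorphism of
`ℂ² ⊗ ℂ²` in the basis `e₁⊗e₁, e₁⊗e₂, e₂⊗e₁, e₂⊗e₂`. -/
noncomputable def sv (a1 a2 b1 b2 c1 c2 : ℂ) :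
    Matrix (Fin 2 × Fin 2) (Fin 2 × Fin 2) ℂ :=
  Matrix.of fun p q =>
    if p = (0, 0) ∧ q = (0, 0) then a1
    else if p = (0, 1) ∧ q = (0, 1) then c1
    else if p = (0, 1) ∧ q = (1, 0) then b1
    else if p = (1, 0) ∧ q = (0, 1) then b2
    else if p = (1, 0) ∧ q = (1, 0) then c2
    else if p = (1, 1) ∧ q = (1, 1) then a2
    else 0

theorem stmt9 (ua1 ua2 ub1 ub2 uc1 uc2 va1 va2 vb1 vb2 vc1 vc2
    wa1 wa2 wb1 wb2 wc1 wc2 : ℂ)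
    (hua1 : ua1 ≠ 0) (hua2 : ua2 ≠ 0) (huc1 : uc1 ≠ 0) (huc2 : uc2 ≠ 0)
    (hva1 : va1 ≠ 0) (hva2 : va2 ≠ 0) (hvc1 : vc1 ≠ 0) (hvc2 : vc2 ≠ 0)
    (hwa1 : wa1 ≠ 0) (hwa2 : wa2 ≠ 0) (hwc1 : wc1 ≠ 0) (hwc2 : wc2 ≠ 0)
    (hybe : ybc (sv ua1 ua2 ub1 ub2 uc1 uc2) (sv wa1 wa2 wb1 wb2 wc1 wc2)
      (sv va1 va2 vb1 vb2 vc1 vc2) = 0)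
    (hc1 : wc1 = uc1 * vc1) (hc2 : wc2 = uc2 * vc2) :
    wa1 = ua1 * va1 - vb1 * ub2 ∧ wa2 = ua2 * va2 - ub1 * vb2 := by
  have h1 := Matrix.ext_iff.2 hybe ((0:Fin 2),(0:Fin 2),(1:Fin 2)) ((0:Fin 2),(0:Fin 2),(1:Fin 2))
  have h2 := Matrix.ext_iff.2 hybe ((0:Fin 2),(1:Fin 2),(1:Fin 2)) ((0:Fin 2),(1:Fin 2),(1:Fin 2))
  simp only [ybc, tenL, tenR, sv, Matrix.sub_apply, Matrix.mul_apply, Matrix.of_apply,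
    Matrix.zero_apply, Fintype.sum_prod_type, Fin.sum_univ_two, Prod.mk.injEq] at h1 h2
  norm_num at h1 h2
  rw [hc1] at h1 h2
  have hcc := mul_ne_zero huc1 hvc1
  constructor
  · have key : uc1 * vc1 * (wa1 - (ua1 * va1 - vb1 * ub2)) = 0 := by linear_combination -h1
    rcases mul_eq_zero.1 key with h | h
    · exact absurd h hcc
    · exact sub_eq_zero.1 h
  · have key : uc1 * vc1 * (wa2 - (ua2 * va2 - ub1 * vb2)) = 0 := by linear_combination h2
    rcases mul_eq_zero.1 key with h | h
    · exact absurd h hcc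
    · exact sub_eq_zero.1 h
end

section
/- Let u, v, w be six-vertex matrices with all entries a₁,a₂,b₁,b₂,c₁,c₂ nonzero, such that both [[u,w,v]] = 0 and [[v,w,u]] = 0 (a commutative solution). Then b₁(u)b₂(v) = b₁(v)b₂(u), (a₁(u)−a₁*(u))b₁(v) = (a₁(v)−a₁*(v))b₁(u), and (a₂(u)−a₂*(u))b₂(v) = (a₂(v)−a₂*(v))b₂(u), where a_i*(x) = (c₁(x)c₂(x) − b₁(x)b₂(x))/a_i(x). -/
open Matrix

set_option maxHeartbeats 1000000 in
theorem stmt10 (ua1 ua2 ub1 ub2 uc1 uc2 va1 va2 vb1 vb2 vc1 vc2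
    wa1 wa2 wb1 wb2 wc1 wc2 : ℂ)
    (hua1 : ua1 ≠ 0) (hua2 : ua2 ≠ 0) (hub1 : ub1 ≠ 0) (hub2 : ub2 ≠ 0)
    (huc1 : uc1 ≠ 0) (huc2 : uc2 ≠ 0)
    (hva1 : va1 ≠ 0) (hva2 : va2 ≠ 0) (hvb1 : vb1 ≠ 0) (hvb2 : vb2 ≠ 0)
    (hvc1 : vc1 ≠ 0) (hvc2 : vc2 ≠ 0)
    (hwa1 : wa1 ≠ 0) (hwa2 : wa2 ≠ 0) (hwb1 : wb1 ≠ 0) (hwb2 : wb2 ≠ 0)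
    (hwc1 : wc1 ≠ 0) (hwc2 : wc2 ≠ 0)
    (h1 : ybc (sv ua1 ua2 ub1 ub2 uc1 uc2) (sv wa1 wa2 wb1 wb2 wc1 wc2)
      (sv va1 va2 vb1 vb2 vc1 vc2) = 0)
    (h2 : ybc (sv va1 va2 vb1 vb2 vc1 vc2) (sv wa1 wa2 wb1 wb2 wc1 wc2)
      (sv ua1 ua2 ub1 ub2 uc1 uc2) = 0) :
    ub1 * vb2 = vb1 * ub2 ∧
    (ua1 - (uc1 * uc2 - ub1 * ub2) / ua1) * vb1
      = (va1 - (vc1 * vc2 - vb1 * vb2) / va1) * ub1 ∧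
    (ua2 - (uc1 * uc2 - ub1 * ub2) / ua2) * vb2
      = (va2 - (vc1 * vc2 - vb1 * vb2) / va2) * ub2 := by 
  have e3 : ua1 * va1 * wc1 = uc1 * vc1 * wa1 + ub2 * vb1 * wc1 := by
    have t := Matrix.ext_iff.2 h1 ((0:Fin 2),(0:Fin 2),(1:Fin 2)) ((0:Fin 2),(0:Fin 2),(1:Fin 2))
    simp [ybc, tenL, tenR, sv, Matrix.mul_apply, Matrix.sub_apply,
      Fintype.sum_prod_type, Fin.sum_univ_two, Prod.ext_iff] at t
    linear_combination t
  have e3' : ua1 * va1 * wc1 = uc1 * vc1 * wa1 + ub1 * vb2 * wc1 := by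
    have t := Matrix.ext_iff.2 h2 ((0:Fin 2),(0:Fin 2),(1:Fin 2)) ((0:Fin 2),(0:Fin 2),(1:Fin 2))
    simp [ybc, tenL, tenR, sv, Matrix.mul_apply, Matrix.sub_apply,
      Fintype.sum_prod_type, Fin.sum_univ_two, Prod.ext_iff] at t
    linear_combination t
  have eA : ua1 * vc1 * wb1 = uc2 * vb1 * wc1 + ub1 * vc1 * wa1 := by
    have t := Matrix.ext_iff.2 h1 ((0:Fin 2),(0:Fin 2),(1:Fin 2)) ((0:Fin 2),(1:Fin 2),(0:Fin 2))
    simp [ybc, tenL, tenR, sv, Matrix.mul_apply, Matrix.sub_apply,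
      Fintype.sum_prod_type, Fin.sum_univ_two, Prod.ext_iff] at t
    linear_combination t
  have eC : uc1 * va1 * wb1 = uc1 * vb1 * wa1 + ub1 * vc2 * wc1 := by
    have t := Matrix.ext_iff.2 h2 ((0:Fin 2),(0:Fin 2),(1:Fin 2)) ((0:Fin 2),(1:Fin 2),(0:Fin 2))
    simp [ybc, tenL, tenR, sv, Matrix.mul_apply, Matrix.sub_apply,
      Fintype.sum_prod_type, Fin.sum_univ_two, Prod.ext_iff] at t
    linear_combination t
  have eA' : ua2 * vc1 * wb2 = uc2 * vb2 * wc1 + ub2 * vc1 * wa2 := by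
    have t := Matrix.ext_iff.2 h1 ((1:Fin 2),(0:Fin 2),(1:Fin 2)) ((0:Fin 2),(1:Fin 2),(1:Fin 2))
    simp [ybc, tenL, tenR, sv, Matrix.mul_apply, Matrix.sub_apply,
      Fintype.sum_prod_type, Fin.sum_univ_two, Prod.ext_iff] at t
    linear_combination -t
  have eC' : uc1 * va2 * wb2 = uc1 * vb2 * wa2 + ub2 * vc2 * wc1 := by
    have t := Matrix.ext_iff.2 h2 ((1:Fin 2),(0:Fin 2),(1:Fin 2)) ((0:Fin 2),(1:Fin 2),(1:Fin 2))
    simp [ybc, tenL, tenR, sv, Matrix.mul_apply, Matrix.sub_apply,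
      Fintype.sum_prod_type, Fin.sum_univ_two, Prod.ext_iff] at t
    linear_combination -t
  have e4 : uc1 * vc1 * wa2 = ua2 * va2 * wc1 - ub1 * vb2 * wc1 := by
    have t := Matrix.ext_iff.2 h1 ((0:Fin 2),(1:Fin 2),(1:Fin 2)) ((0:Fin 2),(1:Fin 2),(1:Fin 2))
    simp [ybc, tenL, tenR, sv, Matrix.mul_apply, Matrix.sub_apply,
      Fintype.sum_prod_type, Fin.sum_univ_two, Prod.ext_iff] at t
    linear_combination t
  have g1 : ub1 * vb2 = vb1 * ub2 := by
    apply mul_left_cancel₀ hwc1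
    linear_combination e3 - e3'
  have hR : uc1 * uc2 * va1 * vb1 - ua1 * ub1 * vc1 * vc2
      = (ua1 * va1 - ub2 * vb1) * (ua1 * vb1 - ub1 * va1) := by
    apply mul_left_cancel₀ hwc1
    linear_combination (ua1 * vc1) * eC - (uc1 * va1) * eA - (ua1 * vb1 - ub1 * va1) * e3
  have hR2 : uc1 * uc2 * va2 * vb2 - ua2 * ub2 * vc1 * vc2
      = (ua2 * va2 - ub1 * vb2) * (ua2 * vb2 - ub2 * va2) := by
    apply mul_left_cancel₀ hwc1
    linear_combination (ua2 * vc1) * eC' - (uc1 * va2) * eA' + (ua2 * vb2 - ub2 * va2) * e4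
  refine ⟨g1, ?_, ?_⟩
  · field_simp
    linear_combination -hR - (ua1 * vb1) * g1
  · field_simp
    linear_combination -hR2 + (ua2 * vb2) * g1
end

section
/- Fix q₁, q₂ ∈ ℂ and β ∈ ℂ^×. For (z₁,z₂,w) ∈ (ℂ^×)³, define R^ff(z₁,z₂,w) to be the six-vertex matrix with a₁ = q₁z₁ − q₂z₂, a₂ = q₁z₂ − q₂z₁, b₁ = q₁(z₁−z₂)β, b₂ = q₂(z₁−z₂)β⁻¹, c₁ = z₁(q₁−q₂)w, c₂ = z₂(q₁−q₂)w⁻¹. Then for all g, h ∈ (ℂ^×)³ (with componentwise multiplication), the Yang–Baxter equation [[R^ff(g), R^ff(gh), R^ff(h)]] = 0 holds. -/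
open Matrix

lemma sv_0000 (a1 a2 b1 b2 c1 c2 : ℂ) : sv a1 a2 b1 b2 c1 c2 (0, 0) (0, 0) = a1 := rfl
lemma sv_0001 (a1 a2 b1 b2 c1 c2 : ℂ) : sv a1 a2 b1 b2 c1 c2 (0, 0) (0, 1) = 0 := rfl
lemma sv_0010 (a1 a2 b1 b2 c1 c2 : ℂ) : sv a1 a2 b1 b2 c1 c2 (0, 0) (1, 0) = 0 := rfl
lemma sv_0011 (a1 a2 b1 b2 c1 c2 : ℂ) : sv a1 a2 b1 b2 c1 c2 (0, 0) (1, 1) = 0 := rfl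
lemma sv_0100 (a1 a2 b1 b2 c1 c2 : ℂ) : sv a1 a2 b1 b2 c1 c2 (0, 1) (0, 0) = 0 := rfl
lemma sv_0101 (a1 a2 b1 b2 c1 c2 : ℂ) : sv a1 a2 b1 b2 c1 c2 (0, 1) (0, 1) = c1 := rfl
lemma sv_0110 (a1 a2 b1 b2 c1 c2 : ℂ) : sv a1 a2 b1 b2 c1 c2 (0, 1) (1, 0) = b1 := rfl
lemma sv_0111 (a1 a2 b1 b2 c1 c2 : ℂ) : sv a1 a2 b1 b2 c1 c2 (0, 1) (1, 1) = 0 := rfl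
lemma sv_1000 (a1 a2 b1 b2 c1 c2 : ℂ) : sv a1 a2 b1 b2 c1 c2 (1, 0) (0, 0) = 0 := rfl
lemma sv_1001 (a1 a2 b1 b2 c1 c2 : ℂ) : sv a1 a2 b1 b2 c1 c2 (1, 0) (0, 1) = b2 := rfl
lemma sv_1010 (a1 a2 b1 b2 c1 c2 : ℂ) : sv a1 a2 b1 b2 c1 c2 (1, 0) (1, 0) = c2 := rfl
lemma sv_1011 (a1 a2 b1 b2 c1 c2 : ℂ) : sv a1 a2 b1 b2 c1 c2 (1, 0) (1, 1) = 0 := rfl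
lemma sv_1100 (a1 a2 b1 b2 c1 c2 : ℂ) : sv a1 a2 b1 b2 c1 c2 (1, 1) (0, 0) = 0 := rfl
lemma sv_1101 (a1 a2 b1 b2 c1 c2 : ℂ) : sv a1 a2 b1 b2 c1 c2 (1, 1) (0, 1) = 0 := rfl
lemma sv_1110 (a1 a2 b1 b2 c1 c2 : ℂ) : sv a1 a2 b1 b2 c1 c2 (1, 1) (1, 0) = 0 := rfl
lemma sv_1111 (a1 a2 b1 b2 c1 c2 : ℂ) : sv a1 a2 b1 b2 c1 c2 (1, 1) (1, 1) = a2 := rfl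

/-- The free-fermionic `R`-matrix `R^ff_{q₁,q₂;β}(z₁,z₂;w)`. -/
noncomputable def Rff (q1 q2 β z1 z2 w : ℂ) : Matrix (Fin 2 × Fin 2) (Fin 2 × Fin 2) ℂ :=
  sv (q1 * z1 - q2 * z2) (q1 * z2 - q2 * z1)
    (q1 * (z1 - z2) * β) (q2 * (z1 - z2) * β⁻¹)
    (z1 * (q1 - q2) * w) (z2 * (q1 - q2) * w⁻¹)

set_option maxHeartbeats 4000000 in
theorem stmt12 (q1 q2 β : ℂ) (hβ : β ≠ 0)
    (z1 z2 w z1' z2' w' : ℂ)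
    (hz1 : z1 ≠ 0) (hz2 : z2 ≠ 0) (hw : w ≠ 0)
    (hz1' : z1' ≠ 0) (hz2' : z2' ≠ 0) (hw' : w' ≠ 0) :
    ybc (Rff q1 q2 β z1 z2 w) (Rff q1 q2 β (z1 * z1') (z2 * z2') (w * w'))
      (Rff q1 q2 β z1' z2' w') = 0 := by
  suffices h : ∀ i j k i' j' k' : Fin 2,
      ybc (Rff q1 q2 β z1 z2 w) (Rff q1 q2 β (z1 * z1') (z2 * z2') (w * w'))
        (Rff q1 q2 β z1' z2' w') (i, j, k) (i', j', k') = 0 by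
    ext ⟨i, j, k⟩ ⟨i', j', k'⟩
    exact h i j k i' j' k'
  simp only [Fin.forall_fin_two]
  repeat' apply And.intro
  all_goals
    simp only [ybc, Matrix.sub_apply, Matrix.mul_apply, tenL, tenR, Rff,
      Matrix.of_apply, Matrix.zero_apply, Fintype.sum_prod_type, Fin.sum_univ_two,
      sv_0000, sv_0001, sv_0010, sv_0011, sv_0100, sv_0101, sv_0110, sv_0111, sv_1000, sv_1001, sv_1010, sv_1011, sv_1100, sv_1101, sv_1110, sv_1111,
      Fin.isValue, Fin.reduceEq, reduceIte, ite_true, ite_false,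
      mul_zero, zero_mul, mul_one, one_mul, add_zero, zero_add, sub_self, sub_zero, zero_sub, neg_eq_zero]
  all_goals first
    | ring1
    | (field_simp; ring1)
end
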